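/- Let A be a bounded operator on a Hilbert space H and let G be a linear operator with D(C) ⊆ D(G) for a self-adjoint nonnegative C satisfying ‖Gx‖² ≤ K(‖x‖² + ‖Cx‖²) on D(C). Let (xₙ) ⊂ D(C) with ∑ₙ(‖xₙ‖² + ‖Cxₙ‖²) < ∞ and ∑ₙ ‖xₙ‖² ≤ 1, and let ρ = ∑ₙ |xₙ⟩⟨xₙ|. Then the trace-class norm of the bounded extension of Gρ satisfies ‖Gρ‖₁ ≤ (∑ₙ ‖G xₙ‖²)^{1/2} ≤ √K (1 + (∑ₙ ‖C xₙ‖²)^{1/2}). -/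

import Mathlib

/-!
Each matrix coefficient of `T = ∑ₙ |G xₙ⟩⟨xₙ|` against orthonormal families is
`⟪e_k, T f_k⟫ = ∑ₙ ⟪xₙ, f_k⟫ ⟪e_k, G xₙ⟫`. Summing over `k` first, Bessel's inequality and
Cauchy–Schwarz bound the inner sum by `‖xₙ‖ ‖G xₙ‖`, and Cauchy–Schwarz in `ℓ²` bounds
`∑ₙ ‖xₙ‖ ‖G xₙ‖` by `(∑ₙ ‖xₙ‖²)^{1/2} (∑ₙ ‖G xₙ‖²)^{1/2} ≤ (∑ₙ ‖G xₙ‖²)^{1/2}`.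
Summing the relative bound of `G` over `n` and using `√(1 + s) ≤ 1 + √s` gives the second
inequality.
-/

open Filter Topology
open scoped ENNReal NNReal

variable {H : Type*} [NormedAddCommGroup H] [InnerProductSpace ℂ H] [CompleteSpace H]

/-- The rank-one operator `|φ⟩⟨ψ| : ξ ↦ ⟪ψ, ξ⟫ φ`. -/
noncomputable def rankOne (φ ψ : H) : H →L[ℂ] H := (innerSL ℂ ψ).smulRight φ

/-- The trace norm, via its variational characterization as the supremum over finite
orthonormal families `(e_k)`, `(f_k)` of `∑ₖ |⟪e_k, A f_k⟫|`; it is finite exactly for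
trace-class operators `A`. -/
noncomputable def traceNorm (A : H →L[ℂ] H) : ℝ≥0∞ :=
  ⨆ (n : ℕ) (e : Fin n → H) (f : Fin n → H) (_ : Orthonormal ℂ e) (_ : Orthonormal ℂ f),
    ∑ k, (‖(inner ℂ (e k) (A (f k)) : ℂ)‖₊ : ℝ≥0∞)

section RealSequences

variable {ι : Type*} {a b : ι → ℝ}

theorem Summable.mul_of_summable_sq (ha : Summable fun i => a i ^ 2)
    (hb : Summable fun i => b i ^ 2) : Summable fun i => a i * b i :=
  Summable.of_norm_bounded ((ha.add hb).div_const 2) fun i => by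
    rw [Real.norm_eq_abs, abs_mul]
    nlinarith [sq_nonneg (|a i| - |b i|), sq_abs (a i), sq_abs (b i)]

theorem tsum_mul_le_sqrt_mul_sqrt (ha : Summable fun i => a i ^ 2)
    (hb : Summable fun i => b i ^ 2) :
    ∑' i, a i * b i ≤ √(∑' i, a i ^ 2) * √(∑' i, b i ^ 2) :=
  (ha.mul_of_summable_sq hb).tsum_le_of_sum_le fun s =>
    (Real.sum_mul_le_sqrt_mul_sqrt s a b).trans <|
      mul_le_mul
        (Real.sqrt_le_sqrt (ha.sum_le_tsum s fun i _ => sq_nonneg (a i)))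
        (Real.sqrt_le_sqrt (hb.sum_le_tsum s fun i _ => sq_nonneg (b i)))
        (Real.sqrt_nonneg _) (Real.sqrt_nonneg _)

end RealSequences

theorem Real.sqrt_add_le_sqrt_add_sqrt {x y : ℝ} (hx : 0 ≤ x) (hy : 0 ≤ y) :
    √(x + y) ≤ √x + √y := by
  rw [Real.sqrt_le_left (by positivity)]
  nlinarith [Real.sq_sqrt hx, Real.sq_sqrt hy,
    mul_nonneg (Real.sqrt_nonneg x) (Real.sqrt_nonneg y)]

section InnerProductSpace

variable {E : Type*} [NormedAddCommGroup E] [InnerProductSpace ℂ E]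

theorem Orthonormal.sum_norm_inner_mul_norm_inner_le {ι : Type*} [Fintype ι] {e f : ι → E}
    (he : Orthonormal ℂ e) (hf : Orthonormal ℂ f) (φ ψ : E) :
    ∑ k, ‖(inner ℂ ψ (f k) : ℂ)‖ * ‖(inner ℂ (e k) φ : ℂ)‖ ≤ ‖ψ‖ * ‖φ‖ := by
  have hψ : ∑ k, ‖(inner ℂ ψ (f k) : ℂ)‖ ^ 2 ≤ ‖ψ‖ ^ 2 := by
    simpa only [norm_inner_symm ψ] using hf.sum_inner_products_le (s := Finset.univ) ψ
  have hφ : ∑ k, ‖(inner ℂ (e k) φ : ℂ)‖ ^ 2 ≤ ‖φ‖ ^ 2 :=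
    he.sum_inner_products_le (s := Finset.univ) φ
  calc ∑ k, ‖(inner ℂ ψ (f k) : ℂ)‖ * ‖(inner ℂ (e k) φ : ℂ)‖
      ≤ √(∑ k, ‖(inner ℂ ψ (f k) : ℂ)‖ ^ 2) * √(∑ k, ‖(inner ℂ (e k) φ : ℂ)‖ ^ 2) :=
        Real.sum_mul_le_sqrt_mul_sqrt _ _ _
    _ ≤ √(‖ψ‖ ^ 2) * √(‖φ‖ ^ 2) :=
        mul_le_mul (Real.sqrt_le_sqrt hψ) (Real.sqrt_le_sqrt hφ)
          (Real.sqrt_nonneg _) (Real.sqrt_nonneg _)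
    _ = ‖ψ‖ * ‖φ‖ := by rw [Real.sqrt_sq (norm_nonneg _), Real.sqrt_sq (norm_nonneg _)]

theorem inner_rankOne_apply (e φ ψ f : E) :
    inner ℂ e (rankOne φ ψ f) = inner ℂ ψ f * inner ℂ e φ := by
  simp [rankOne]

theorem hasSum_inner_apply_of_hasSum_rankOne {ι : Type*} {u v : ι → E} {T : E →L[ℂ] E}
    (hT : HasSum (fun n => rankOne (v n) (u n)) T) (e f : E) :
    HasSum (fun n => inner ℂ (u n) f * inner ℂ e (v n)) (inner ℂ e (T f)) := by
  simpa only [ContinuousLinearMap.apply_apply, innerSL_apply_apply, inner_rankOne_apply] using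
    (hT.mapL (ContinuousLinearMap.apply ℂ E f)).mapL (innerSL ℂ e)

theorem traceNorm_le_of_hasSum_rankOne {ι : Type*} {u v : ι → E} {T : E →L[ℂ] E}
    (hT : HasSum (fun n => rankOne (v n) (u n)) T) (hu : Summable fun n => ‖u n‖ ^ 2)
    (hv : Summable fun n => ‖v n‖ ^ 2) :
    traceNorm T ≤ ENNReal.ofReal (√(∑' n, ‖u n‖ ^ 2) * √(∑' n, ‖v n‖ ^ 2)) := by
  refine iSup_le fun m => iSup_le fun e => iSup_le fun f => iSup_le fun he => iSup_le fun hf => ?_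
  set c : Fin m → ι → ℝ := fun k n => ‖(inner ℂ (u n) (f k) : ℂ)‖ * ‖(inner ℂ (e k) (v n) : ℂ)‖
  have huv : Summable fun n => ‖u n‖ * ‖v n‖ := hu.mul_of_summable_sq hv
  have hc : ∀ k, Summable (c k) := fun k =>
    huv.of_nonneg_of_le (fun n => by positivity) fun n =>
      mul_le_mul (by simpa [hf.1 k] using norm_inner_le_norm (𝕜 := ℂ) (u n) (f k))
        (by simpa [he.1 k] using norm_inner_le_norm (𝕜 := ℂ) (e k) (v n))
        (norm_nonneg _) (norm_nonneg _)
  have hk : ∀ k, ‖(inner ℂ (e k) (T (f k)) : ℂ)‖ ≤ ∑' n, c k n := fun k => by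
    rw [← (hasSum_inner_apply_of_hasSum_rankOne hT (e k) (f k)).tsum_eq]
    refine (norm_tsum_le_tsum_norm ?_).trans_eq ?_ <;> simp only [norm_mul]
    exacts [hc k, rfl]
  have hsum : ∑ k, ‖(inner ℂ (e k) (T (f k)) : ℂ)‖ ≤
      √(∑' n, ‖u n‖ ^ 2) * √(∑' n, ‖v n‖ ^ 2) :=
    calc ∑ k, ‖(inner ℂ (e k) (T (f k)) : ℂ)‖
        ≤ ∑ k, ∑' n, c k n := Finset.sum_le_sum fun k _ => hk k
      _ = ∑' n, ∑ k, c k n := (Summable.tsum_finsetSum fun k _ => hc k).symm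
      _ ≤ ∑' n, ‖u n‖ * ‖v n‖ := (summable_sum fun k _ => hc k).tsum_le_tsum
          (fun n => he.sum_norm_inner_mul_norm_inner_le hf (v n) (u n)) huv
      _ ≤ _ := tsum_mul_le_sqrt_mul_sqrt hu hv
  calc ∑ k, (‖(inner ℂ (e k) (T (f k)) : ℂ)‖₊ : ℝ≥0∞)
      = ENNReal.ofReal (∑ k, ‖(inner ℂ (e k) (T (f k)) : ℂ)‖) := by
        simp only [ENNReal.ofReal_sum_of_nonneg fun k _ => norm_nonneg _, ofReal_norm,
          enorm_eq_nnnorm]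
    _ ≤ _ := ENNReal.ofReal_le_ofReal hsum

end InnerProductSpace

theorem stmt_19_general
    (C : H →ₗ.[ℂ] H)
    (G : H →ₗ.[ℂ] H) (hGdom : C.domain ≤ G.domain)
    (K : ℝ) (hK : 0 ≤ K)
    (hGb : ∀ u : C.domain, ‖G ⟨(u : H), hGdom u.2⟩‖ ^ 2 ≤ K * (‖(u : H)‖ ^ 2 + ‖C u‖ ^ 2))
    (x : ℕ → C.domain)
    (hx1 : Summable fun n => ‖(x n : H)‖ ^ 2 + ‖C (x n)‖ ^ 2)
    (hx2 : ∑' n, ‖(x n : H)‖ ^ 2 ≤ 1)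
    (T : H →L[ℂ] H)
    (hT : HasSum (fun n => rankOne (G ⟨(x n : H), hGdom (x n).2⟩) ((x n : H))) T) :
    traceNorm T ≤
      ENNReal.ofReal (Real.sqrt (∑' n, ‖G ⟨(x n : H), hGdom (x n).2⟩‖ ^ 2)) ∧
    Real.sqrt (∑' n, ‖G ⟨(x n : H), hGdom (x n).2⟩‖ ^ 2) ≤
      Real.sqrt K * (1 + Real.sqrt (∑' n, ‖C (x n)‖ ^ 2)) := by
  set g : ℕ → H := fun n => G ⟨(x n : H), hGdom (x n).2⟩
  have hx : Summable fun n => ‖(x n : H)‖ ^ 2 :=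
    hx1.of_nonneg_of_le (fun n => by positivity) fun n => le_add_of_nonneg_right (by positivity)
  have hCx : Summable fun n => ‖C (x n)‖ ^ 2 :=
    hx1.of_nonneg_of_le (fun n => by positivity) fun n => le_add_of_nonneg_left (by positivity)
  have hg : Summable fun n => ‖g n‖ ^ 2 :=
    (hx1.mul_left K).of_nonneg_of_le (fun n => by positivity) fun n => hGb (x n)
  have hg_le : ∑' n, ‖g n‖ ^ 2 ≤ K * (1 + ∑' n, ‖C (x n)‖ ^ 2) :=
    calc ∑' n, ‖g n‖ ^ 2 ≤ ∑' n, K * (‖(x n : H)‖ ^ 2 + ‖C (x n)‖ ^ 2) :=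
          hg.tsum_le_tsum (fun n => hGb (x n)) (hx1.mul_left K)
      _ = K * (∑' n, ‖(x n : H)‖ ^ 2 + ∑' n, ‖C (x n)‖ ^ 2) := by
          rw [tsum_mul_left, hx.tsum_add hCx]
      _ ≤ K * (1 + ∑' n, ‖C (x n)‖ ^ 2) := by gcongr
  refine ⟨(traceNorm_le_of_hasSum_rankOne hT hx hg).trans (ENNReal.ofReal_le_ofReal ?_), ?_⟩
  · exact mul_le_of_le_one_left (Real.sqrt_nonneg _) (Real.sqrt_le_one.2 hx2)
  · calc √(∑' n, ‖g n‖ ^ 2) ≤ √K * √(1 + ∑' n, ‖C (x n)‖ ^ 2) := by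
          rw [← Real.sqrt_mul hK]
          exact Real.sqrt_le_sqrt hg_le
      _ ≤ √K * (1 + √(∑' n, ‖C (x n)‖ ^ 2)) := by
          grw [Real.sqrt_add_le_sqrt_add_sqrt zero_le_one (tsum_nonneg fun n => by positivity),
            Real.sqrt_one]

/-- Let `A` be a bounded operator on `H` and `G` a linear operator with `D(C) ⊆ D(G)` for
a self-adjoint nonnegative `C` satisfying `‖G x‖² ≤ K (‖x‖² + ‖C x‖²)` on `D(C)`.  Let
`(xₙ) ⊆ D(C)` with `∑ₙ (‖xₙ‖² + ‖C xₙ‖²) < ∞` and `∑ₙ ‖xₙ‖² ≤ 1`, and `ρ = ∑ₙ |xₙ⟩⟨xₙ|`.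
Then the trace norm of the bounded extension `T = ∑ₙ |G xₙ⟩⟨xₙ|` of `G ρ` satisfies
`‖G ρ‖₁ ≤ (∑ₙ ‖G xₙ‖²)^{1/2} ≤ √K (1 + (∑ₙ ‖C xₙ‖²)^{1/2})`. -/
theorem stmt_19 [TopologicalSpace.SeparableSpace H]
    (A : H →L[ℂ] H)
    (C : H →ₗ.[ℂ] H)
    (hsa : IsSelfAdjoint C)
    (hnn : ∀ u : C.domain, 0 ≤ (inner ℂ ((u : H)) (C u) : ℂ).re)
    (G : H →ₗ.[ℂ] H) (hGdom : C.domain ≤ G.domain)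
    (K : ℝ) (hK : 0 ≤ K)
    (hGb : ∀ u : C.domain, ‖G ⟨(u : H), hGdom u.2⟩‖ ^ 2 ≤ K * (‖(u : H)‖ ^ 2 + ‖C u‖ ^ 2))
    (x : ℕ → C.domain)
    (hx1 : Summable fun n => ‖(x n : H)‖ ^ 2 + ‖C (x n)‖ ^ 2)
    (hx2 : ∑' n, ‖(x n : H)‖ ^ 2 ≤ 1)
    (ρ : H →L[ℂ] H) (hρ : HasSum (fun n => rankOne ((x n : H)) ((x n : H))) ρ)
    (T : H →L[ℂ] H)
    (hT : HasSum (fun n => rankOne (G ⟨(x n : H), hGdom (x n).2⟩) ((x n : H))) T) :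
    traceNorm T ≤
      ENNReal.ofReal (Real.sqrt (∑' n, ‖G ⟨(x n : H), hGdom (x n).2⟩‖ ^ 2)) ∧
    Real.sqrt (∑' n, ‖G ⟨(x n : H), hGdom (x n).2⟩‖ ^ 2) ≤
      Real.sqrt K * (1 + Real.sqrt (∑' n, ‖C (x n)‖ ^ 2)) :=
  stmt_19_general C G hGdom K hK hGb x hx1 hx2 T hT
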